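/- arXiv:1912.13027 — 5 statements merged into one kernel-verified Lean document; each statement's English description precedes it below -/
import Mathlib

section
/- Under the hypotheses: I : [0,∞) → ℝ differentiable nondecreasing with I(0)=0, I'(s)=M(s)/2, 0 ≤ M ≤ 1, I ≤ H, and L := H - I(2H); let F(s) = I(s) + (δ/2)·φ(s/(δ·snr)). If t ≥ 2H and δ > (t + 2L)/log(1+snr), then min over s ∈ (0,t] of F(s) is strictly greater than the infimum of F over (0,∞); in particular every global minimizer of F exceeds t. -/
theorem minimizer_lower_bound
    (I M : ℝ → ℝ) (H δ snr t : ℝ) (hH : 0 < H) (hδ : 0 < δ) (hsnr : 0 < snr)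
    (hI0 : I 0 = 0)
    (hmono : MonotoneOn I (Set.Ici (0:ℝ)))
    (hderiv : ∀ s, 0 ≤ s → HasDerivAt I (M s / 2) s)
    (hM : ∀ s, 0 ≤ s → 0 ≤ M s ∧ M s ≤ 1)
    (hIH : ∀ s, 0 ≤ s → I s ≤ H)
    (F : ℝ → ℝ)
    (hF : F = fun s => I s + (δ / 2) * (s / (δ * snr) - Real.log (s / (δ * snr)) - 1))
    (ht : 2 * H ≤ t)
    (hδt : δ > (t + 2 * (H - I (2 * H))) / Real.log (1 + snr)) :
    sInf (F '' Set.Ioi (0:ℝ)) < sInf (F '' Set.Ioc (0:ℝ) t) ∧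
    ∀ s ∈ Set.Ioi (0:ℝ), (∀ u ∈ Set.Ioi (0:ℝ), F s ≤ F u) → t < s := by
  have hδsnr : 0 < δ * snr := mul_pos hδ hsnr
  have hlog : 0 < Real.log (1 + snr) := Real.log_pos (by linarith)
  have hInn : ∀ s, 0 ≤ s → 0 ≤ I s := by
    intro s hs
    have := hmono (Set.self_mem_Ici) (Set.mem_Ici.mpr hs) hs
    linarith [hI0, this]
  have hL0 : 0 ≤ H - I (2*H) := by have := hIH (2*H) (by linarith); linarith
  have hδlog : t + 2 * (H - I (2 * H)) < δ * Real.log (1 + snr) :=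
    (div_lt_iff₀ hlog).mp hδt
  -- phi nonneg
  have hphi0 : ∀ x : ℝ, 0 < x → 0 ≤ x - Real.log x - 1 := by
    intro x hx
    have := Real.log_le_sub_one_of_pos hx; linarith
  -- phi key bound
  have hphiK : ∀ x : ℝ, 0 < x → Real.log (1+snr) - snr * x ≤ x - Real.log x - 1 := by
    intro x hx
    have h1 : Real.log ((1+snr)*x) ≤ (1+snr)*x - 1 :=
      Real.log_le_sub_one_of_pos (mul_pos (by linarith) hx)
    rw [Real.log_mul (by positivity) (ne_of_gt hx)] at h1
    nlinarith
  -- g = x/2 - I x is monotone on [0, ∞)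
  have hg : MonotoneOn (fun x => x/2 - I x) (Set.Ici (0:ℝ)) := by
    apply monotoneOn_of_deriv_nonneg (convex_Ici 0)
    · intro x hx
      exact (((hasDerivAt_id x).div_const 2).sub (hderiv x hx)).continuousAt.continuousWithinAt
    · intro x hx
      rw [interior_Ici] at hx
      exact (((hasDerivAt_id x).div_const 2).sub
        (hderiv x hx.le)).differentiableAt.differentiableWithinAt
    · intro x hx
      rw [interior_Ici] at hx
      have hd : HasDerivAt (fun x => x/2 - I x) (1/2 - M x / 2) x :=
        ((hasDerivAt_id x).div_const 2).sub (hderiv x hx.le)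
      rw [hd.deriv]
      have := (hM x hx.le).2
      linarith
  have hIlow1 : ∀ s, 0 ≤ s → s ≤ 2*H → s/2 - (H - I (2*H)) ≤ I s := by
    intro s hs h2
    have h := hg (Set.mem_Ici.mpr hs) (Set.mem_Ici.mpr (by linarith : (0:ℝ) ≤ 2*H)) h2
    simp only at h
    linarith
  have hIlow2 : ∀ s, 2*H ≤ s → H - (H - I (2*H)) ≤ I s := by
    intro s hs
    have := hmono (Set.mem_Ici.mpr (by linarith : (0:ℝ) ≤ 2*H))
      (Set.mem_Ici.mpr (by linarith)) hs
    linarith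
  have hHc : H < H - (H - I (2*H)) + δ/2 * Real.log (1+snr) - t/2 := by linarith
  -- uniform lower bound on (0, t]
  have hA : ∀ s ∈ Set.Ioc (0:ℝ) t,
      H - (H - I (2*H)) + δ/2 * Real.log (1+snr) - t/2 ≤ F s := by
    intro s hs
    obtain ⟨hs0, hst⟩ := hs
    have hx : 0 < s/(δ*snr) := div_pos hs0 hδsnr
    have hk := hphiK _ hx
    have hsnrx : snr * (s/(δ*snr)) = s/δ := by field_simp
    rw [hsnrx] at hk
    have h2 : δ/2 * (Real.log (1+snr) - s/δ)
        ≤ δ/2 * (s/(δ*snr) - Real.log (s/(δ*snr)) - 1) :=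
      mul_le_mul_of_nonneg_left hk (by positivity)
    have h3 : δ/2 * (Real.log (1+snr) - s/δ) = δ/2 * Real.log (1+snr) - s/2 := by
      field_simp
    rw [h3] at h2
    rw [hF]
    by_cases h2H : s ≤ 2*H
    · have := hIlow1 s hs0.le h2H
      simp only
      linarith
    · push_neg at h2H
      have := hIlow2 s h2H.le
      simp only
      linarith
  have hFds : F (δ*snr) = I (δ*snr) := by
    rw [hF]
    simp only
    rw [div_self (ne_of_gt hδsnr)]
    simp
  have hδsnrt : t < δ * snr := by
    have hlogle : Real.log (1+snr) ≤ snr := by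
      have := Real.log_le_sub_one_of_pos (show (0:ℝ) < 1+snr by linarith); linarith
    nlinarith [mul_le_mul_of_nonneg_left hlogle hδ.le]
  have hbdd : BddBelow (F '' Set.Ioi (0:ℝ)) := by
    refine ⟨0, ?_⟩
    rintro y ⟨s, hs, rfl⟩
    have h1 := hInn s (le_of_lt hs)
    have h2 := hphi0 _ (div_pos (Set.mem_Ioi.mp hs) hδsnr)
    have h3 : 0 ≤ δ/2 * (s/(δ*snr) - Real.log (s/(δ*snr)) - 1) :=
      mul_nonneg (by positivity) h2
    rw [hF]
    simp only
    linarith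
  have hup : sInf (F '' Set.Ioi (0:ℝ)) ≤ H := by
    have hmem : F (δ*snr) ∈ F '' Set.Ioi (0:ℝ) :=
      ⟨δ*snr, Set.mem_Ioi.mpr hδsnr, rfl⟩
    have := csInf_le hbdd hmem
    rw [hFds] at this
    exact this.trans (hIH _ hδsnr.le)
  have hlow : H - (H - I (2*H)) + δ/2 * Real.log (1+snr) - t/2
      ≤ sInf (F '' Set.Ioc (0:ℝ) t) := by
    apply le_csInf
    · exact ⟨F t, ⟨t, ⟨by linarith, le_refl t⟩, rfl⟩⟩
    · rintro y ⟨s, hs, rfl⟩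
      exact hA s hs
  constructor
  · calc sInf (F '' Set.Ioi (0:ℝ)) ≤ H := hup
      _ < H - (H - I (2*H)) + δ/2 * Real.log (1+snr) - t/2 := hHc
      _ ≤ sInf (F '' Set.Ioc (0:ℝ) t) := hlow
  · intro s hs hmin
    by_contra hcon
    push_neg at hcon
    have h1 : F s ≤ F (δ*snr) := hmin (δ*snr) (Set.mem_Ioi.mpr hδsnr)
    rw [hFds] at h1
    have h2 := hA s ⟨Set.mem_Ioi.mp hs, hcon⟩
    have h3 := hIH (δ*snr) hδsnr.le
    linarith
end

section
/- Under the hypotheses: I : [0,∞) → ℝ differentiable nondecreasing with I(0)=0, I'(s)=M(s)/2, 0 ≤ M ≤ 1, I ≤ H, and L := H - I(2H); let F(s) = I(s) + (δ/2)·φ(s/(δ·snr)). If 0 < t ≤ 2H and δ < (t - 2L)/log(1+snr), then inf over s ∈ [t,∞) of F(s) is strictly greater than inf of F over (0,∞); in particular every global minimizer of F is strictly less than t. -/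
/-!
Since `I' = M / 2 ≤ 1 / 2`, the gap `s / 2 - I s` is nondecreasing on `[0, ∞)`. Comparing with
`s = 0` gives `I s ≤ s / 2`; comparing `t` with `2H` gives `I t ≥ t / 2 - L`, `L = H - I (2H)`.
As `φ ≥ 0` and `I` is nondecreasing, `F ≥ t / 2 - L` on `[t, ∞)`. At `s₀ = δ snr / (1 + snr)`
the bound `I s₀ ≤ s₀ / 2` gives `F s₀ ≤ (δ / 2) log (1 + snr)`, which the hypothesis on `δ`
places strictly below `t / 2 - L`.
-/

open Set Real

lemma monotoneOn_half_sub_of_hasDerivAt {I M : ℝ → ℝ}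
    (hderiv : ∀ s, 0 ≤ s → HasDerivAt I (M s / 2) s) (hM : ∀ s, 0 ≤ s → M s ≤ 1) :
    MonotoneOn (fun s => s / 2 - I s) (Ici 0) := by
  have hgap : ∀ s, 0 ≤ s → HasDerivAt (fun u => u / 2 - I u) (1 / 2 - M s / 2) s :=
    fun s hs => ((hasDerivAt_id s).div_const 2).sub (hderiv s hs)
  refine monotoneOn_of_deriv_nonneg (convex_Ici 0)
    (fun s hs => (hgap s hs).continuousAt.continuousWithinAt) ?_ ?_
  · rw [interior_Ici]
    exact fun s hs => (hgap s (le_of_lt hs)).differentiableAt.differentiableWithinAt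
  · rw [interior_Ici]
    intro s hs
    rw [(hgap s (le_of_lt hs)).deriv]
    linarith [hM s (le_of_lt hs)]

lemma sub_log_sub_one_nonneg {x : ℝ} (hx : 0 < x) : 0 ≤ x - log x - 1 := by
  linarith [log_le_sub_one_of_pos hx]

lemma half_add_mul_sub_log_sub_one {δ snr : ℝ} (hδ : 0 < δ) (hsnr : 0 < snr) :
    let s₀ := δ * snr / (1 + snr)
    s₀ / 2 + δ / 2 * (s₀ / (δ * snr) - log (s₀ / (δ * snr)) - 1) =
      δ / 2 * log (1 + snr) := by
  intro s₀
  have hratio : s₀ / (δ * snr) = (1 + snr)⁻¹ := by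
    simp only [s₀]
    field_simp
  rw [hratio, log_inv]
  simp only [s₀]
  field_simp
  ring

lemma csInf_image_lt_csInf_image {α : Type*} {f : α → ℝ} {A B : Set α} {x : α} {c : ℝ}
    (hbdd : BddBelow (f '' A)) (hx : x ∈ A) (hfx : f x < c) (hB : B.Nonempty)
    (hc : ∀ y ∈ B, c ≤ f y) : sInf (f '' A) < sInf (f '' B) :=
  calc sInf (f '' A) ≤ f x := csInf_le hbdd (mem_image_of_mem f hx)
    _ < c := hfx
    _ ≤ sInf (f '' B) := le_csInf (hB.image f) (forall_mem_image.2 hc)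

theorem minimizer_upper_bound_general
    (I M : ℝ → ℝ) (H δ snr t : ℝ) (hδ : 0 < δ) (hsnr : 0 < snr)
    (hI0 : I 0 = 0)
    (hmono : MonotoneOn I (Set.Ici (0:ℝ)))
    (hderiv : ∀ s, 0 ≤ s → HasDerivAt I (M s / 2) s)
    (hM : ∀ s, 0 ≤ s → 0 ≤ M s ∧ M s ≤ 1)
    (F : ℝ → ℝ)
    (hF : F = fun s => I s + (δ / 2) * (s / (δ * snr) - Real.log (s / (δ * snr)) - 1))
    (ht0 : 0 < t) (ht : t ≤ 2 * H)
    (hδt : δ < (t - 2 * (H - I (2 * H))) / Real.log (1 + snr)) :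
    sInf (F '' Set.Ioi (0:ℝ)) < sInf (F '' Set.Ici t) ∧
    ∀ s ∈ Set.Ioi (0:ℝ), (∀ u ∈ Set.Ioi (0:ℝ), F s ≤ F u) → s < t := by
  set L := H - I (2 * H)
  have hgap := monotoneOn_half_sub_of_hasDerivAt hderiv fun s hs => (hM s hs).2
  have hI_le_F : ∀ s, 0 < s → I s ≤ F s := fun s hs => by
    have := mul_nonneg (half_pos hδ).le (sub_log_sub_one_nonneg (by positivity : 0 < s / (δ * snr)))
    rw [hF]
    linarith
  have hF_nonneg : ∀ s, 0 < s → 0 ≤ F s := fun s hs =>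
    (hI0 ▸ hmono self_mem_Ici hs.le hs.le).trans (hI_le_F s hs)
  have hIt : t / 2 - L ≤ I t := by
    have := hgap ht0.le (ht0.le.trans ht) ht
    simp only [L]
    linarith
  have hlower : ∀ s ∈ Ici t, t / 2 - L ≤ F s := fun s hs => by
    linarith [hmono ht0.le (ht0.le.trans hs) hs, hI_le_F s (ht0.trans_le hs)]
  set s₀ := δ * snr / (1 + snr)
  have hs₀ : 0 < s₀ := by positivity
  have hupper : F s₀ < t / 2 - L := by
    have hI_le_half : I s₀ ≤ s₀ / 2 := by linarith [hgap self_mem_Ici hs₀.le hs₀.le]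
    have hδL := (lt_div_iff₀ (log_pos (by linarith : 1 < 1 + snr))).mp hδt
    rw [hF]
    linarith [half_add_mul_sub_log_sub_one hδ hsnr]
  have hbdd : BddBelow (F '' Ioi 0) := ⟨0, forall_mem_image.2 hF_nonneg⟩
  refine ⟨csInf_image_lt_csInf_image hbdd hs₀ hupper nonempty_Ici hlower, fun s _ hmin => ?_⟩
  by_contra! hts
  linarith [hmin s₀ hs₀, hlower s hts]

theorem minimizer_upper_bound
    (I M : ℝ → ℝ) (H δ snr t : ℝ) (hH : 0 < H) (hδ : 0 < δ) (hsnr : 0 < snr)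
    (hI0 : I 0 = 0)
    (hmono : MonotoneOn I (Set.Ici (0:ℝ)))
    (hderiv : ∀ s, 0 ≤ s → HasDerivAt I (M s / 2) s)
    (hM : ∀ s, 0 ≤ s → 0 ≤ M s ∧ M s ≤ 1)
    (hIH : ∀ s, 0 ≤ s → I s ≤ H)
    (F : ℝ → ℝ)
    (hF : F = fun s => I s + (δ / 2) * (s / (δ * snr) - Real.log (s / (δ * snr)) - 1))
    (ht0 : 0 < t) (ht : t ≤ 2 * H)
    (hδt : δ < (t - 2 * (H - I (2 * H))) / Real.log (1 + snr)) :
    sInf (F '' Set.Ioi (0:ℝ)) < sInf (F '' Set.Ici t) ∧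
    ∀ s ∈ Set.Ioi (0:ℝ), (∀ u ∈ Set.Ioi (0:ℝ), F s ≤ F u) → s < t :=
  minimizer_upper_bound_general I M H δ snr t hδ hsnr hI0 hmono hderiv hM F hF ht0 ht hδt
end

section
/- Fix snr > 0 and r ∈ (0,1) ∪ (1,∞). The function G(t) = min(t,1) + (r/log(1+snr))·φ(t·log(1+snr)/(r·snr)) on (0,∞), with φ(x) = x - log x - 1, has a unique global minimizer t*, given by t* = r·snr/((1+snr)·log(1+snr)) when r ∈ (0,1) and t* = r·snr/log(1+snr) when r ∈ (1,∞). -/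
theorem limiting_potential_unique_minimizer
    (snr r : ℝ) (hsnr : 0 < snr) (hr : r ∈ Set.Ioo (0:ℝ) 1 ∪ Set.Ioi (1:ℝ))
    (G : ℝ → ℝ)
    (hG : G = fun t => min t 1 + (r / Real.log (1 + snr)) *
        (t * Real.log (1 + snr) / (r * snr) - Real.log (t * Real.log (1 + snr) / (r * snr)) - 1)) :
    (r < 1 →
      (∀ t ∈ Set.Ioi (0:ℝ), G (r * snr / ((1 + snr) * Real.log (1 + snr))) ≤ G t) ∧
      ∀ t ∈ Set.Ioi (0:ℝ), G t = G (r * snr / ((1 + snr) * Real.log (1 + snr))) →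
        t = r * snr / ((1 + snr) * Real.log (1 + snr))) ∧
    (1 < r →
      (∀ t ∈ Set.Ioi (0:ℝ), G (r * snr / Real.log (1 + snr)) ≤ G t) ∧
      ∀ t ∈ Set.Ioi (0:ℝ), G t = G (r * snr / Real.log (1 + snr)) →
        t = r * snr / Real.log (1 + snr)) := by
  have hs1 : (0:ℝ) < 1 + snr := by linarith
  have hL : 0 < Real.log (1 + snr) := Real.log_pos (by linarith)
  set L := Real.log (1 + snr) with hLdef
  have hr0 : 0 < r := by
    rcases hr with h | h
    · exact h.1
    · exact lt_trans one_pos h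
  have hGt : ∀ t, G t = min t 1 +
      r / L * (t * L / (r * snr) - Real.log (t * L / (r * snr)) - 1) := by
    intro t; rw [hG]
  have hA : 0 < r / L := div_pos hr0 hL
  have hAL : r / L * L = r := div_mul_cancel₀ r (ne_of_gt hL)
  have hlog_inv : Real.log (1 / (1 + snr)) = -L := by
    rw [Real.log_div one_ne_zero (ne_of_gt hs1), Real.log_one, hLdef]
    ring
  have hsnrL : snr ≤ (1 + snr) * L := by
    have h1 : Real.log (1 / (1 + snr)) ≤ 1 / (1 + snr) - 1 :=
      Real.log_le_sub_one_of_pos (by positivity)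
    rw [hlog_inv] at h1
    have h2 : (1 + snr) * (1 / (1 + snr)) = 1 := mul_one_div_cancel (ne_of_gt hs1)
    nlinarith
  have hLsnr : L ≤ snr := by
    have := Real.log_le_sub_one_of_pos hs1
    linarith
  -- key lemma 1 : t ↦ t + (r/L)·φ(tL/(r snr)) is ≥ r, strictly unless t = r snr/((1+snr)L)
  have key1 : ∀ t : ℝ, 0 < t →
      r ≤ t + r / L * (t * L / (r * snr) - Real.log (t * L / (r * snr)) - 1) ∧
      (t ≠ r * snr / ((1 + snr) * L) →
        r < t + r / L * (t * L / (r * snr) - Real.log (t * L / (r * snr)) - 1)) := by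
    intro t ht
    have hx0 : 0 < t * L / (r * snr) := by positivity
    set x := t * L / (r * snr) with hxdef
    have hxL : r / L * x = t / snr := by
      rw [hxdef]; field_simp
    have hxL2 : r / L * ((1 + snr) * x) = t / snr + t := by
      rw [hxdef]; field_simp
    have hlogx : Real.log x = Real.log ((1 + snr) * x) - L := by
      rw [Real.log_mul (ne_of_gt hs1) (ne_of_gt hx0), hLdef]; ring
    have hb : Real.log ((1 + snr) * x) ≤ (1 + snr) * x - 1 :=
      Real.log_le_sub_one_of_pos (by positivity)
    constructor
    · nlinarith [mul_nonneg hA.le (sub_nonneg.mpr hb)]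
    · intro hne
      have hxne : (1 + snr) * x ≠ 1 := by
        intro hcon
        apply hne
        rw [hxdef] at hcon
        field_simp at hcon
        field_simp
        linarith
      have hb' : Real.log ((1 + snr) * x) < (1 + snr) * x - 1 :=
        Real.log_lt_sub_one_of_pos (by positivity) hxne
      nlinarith [mul_pos hA (sub_pos.mpr hb')]
  -- key lemma 2 : φ ≥ 0, strict unless argument = 1
  have key2 : ∀ t : ℝ, 0 < t →
      0 ≤ t * L / (r * snr) - Real.log (t * L / (r * snr)) - 1 ∧
      (t ≠ r * snr / L →
        0 < t * L / (r * snr) - Real.log (t * L / (r * snr)) - 1) := by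
    intro t ht
    have hx0 : 0 < t * L / (r * snr) := by positivity
    constructor
    · have := Real.log_le_sub_one_of_pos hx0
      linarith
    · intro hne
      have hxne : t * L / (r * snr) ≠ 1 := by
        intro hcon
        apply hne
        field_simp at hcon
        field_simp
        linarith
      have := Real.log_lt_sub_one_of_pos hx0 hxne
      linarith
  constructor
  · -- case r < 1
    intro hr1
    set t₁ := r * snr / ((1 + snr) * L) with ht₁def
    have ht₁0 : 0 < t₁ := by positivity
    have ht₁lt : t₁ < 1 := by
      rw [ht₁def, div_lt_one (by positivity)]
      nlinarith
    -- G t₁ = r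
    have hx₁ : t₁ * L / (r * snr) = 1 / (1 + snr) := by
      rw [ht₁def]; field_simp
    have hGt₁ : G t₁ = r := by
      rw [hGt t₁, hx₁, hlog_inv, min_eq_left ht₁lt.le, ht₁def]
      field_simp
      ring
    have hlower : ∀ t ∈ Set.Ioi (0:ℝ), r ≤ G t := by
      intro t ht
      simp only [Set.mem_Ioi] at ht
      rw [hGt t]
      rcases le_or_gt t 1 with h | h
      · rw [min_eq_left h]
        exact (key1 t ht).1
      · rw [min_eq_right h.le]
        have := (key2 t ht).1
        nlinarith
    refine ⟨fun t ht => hGt₁ ▸ hlower t ht, ?_⟩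
    intro t ht heq
    simp only [Set.mem_Ioi] at ht
    rw [hGt₁] at heq
    by_contra hne
    rcases le_or_gt t 1 with h | h
    · have := (key1 t ht).2 hne
      rw [hGt t, min_eq_left h] at heq
      linarith
    · have := (key2 t ht).1
      rw [hGt t, min_eq_right h.le] at heq
      nlinarith
  · -- case 1 < r
    intro hr1
    set t₂ := r * snr / L with ht₂def
    have ht₂0 : 0 < t₂ := by positivity
    have ht₂gt : 1 < t₂ := by
      rw [ht₂def, lt_div_iff₀ hL]
      nlinarith
    have hx₂ : t₂ * L / (r * snr) = 1 := by
      rw [ht₂def]; field_simp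
    have hGt₂ : G t₂ = 1 := by
      rw [hGt t₂, hx₂, Real.log_one, min_eq_right ht₂gt.le]
      ring
    have hlower : ∀ t ∈ Set.Ioi (0:ℝ), 1 ≤ G t := by
      intro t ht
      simp only [Set.mem_Ioi] at ht
      rw [hGt t]
      rcases le_or_gt t 1 with h | h
      · rw [min_eq_left h]
        have := (key1 t ht).1
        linarith
      · rw [min_eq_right h.le]
        have := (key2 t ht).1
        nlinarith
    refine ⟨fun t ht => hGt₂ ▸ hlower t ht, ?_⟩
    intro t ht heq
    simp only [Set.mem_Ioi] at ht
    rw [hGt₂] at heq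
    by_contra hne
    rcases le_or_gt t 1 with h | h
    · have := (key1 t ht).1
      rw [hGt t, min_eq_left h] at heq
      linarith
    · have := (key2 t ht).2 hne
      rw [hGt t, min_eq_right h.le] at heq
      nlinarith
end

section
/- Let M : [0,∞) → [0,1] be integrable with M(s) ≤ 1 and define I(s) = (1/2)∫₀^s M(u)du. Suppose I(s) ≤ H for all s > 0, where H > 0. If for every t ∈ (0,1), M(2H·t) → 1 along a family indexed by ε → 0 (with H = H_ε possibly depending on ε), then I(2H_ε·t)/H_ε → min(t,1) for every t > 0 as ε → 0. -/
/-!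
Rescale time by `2H`: `I(2Ht)/H = ∫₀ᵗ M(2Hτ) dτ`. The integrand is bounded by `1` and tends to
`1` on `(0, 1)`, so by dominated convergence `∫₀^{min t 1} M(2Hτ) dτ → min t 1`. Since `M ≥ 0`
this integral is a lower bound for `I(2Ht)/H`, while `M ≤ 1` and `I ≤ H` give the upper bound
`min t 1`; squeeze.
-/

open MeasureTheory Filter Set Topology

theorem tendsto_intervalIntegral_of_tendsto_one {ι : Type*} {l : Filter ι}
    [l.IsCountablyGenerated] {f : ι → ℝ → ℝ} {t : ℝ} (ht : 0 ≤ t)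
    (hf_meas : ∀ᶠ i in l, Measurable (f i))
    (hf_bound : ∀ᶠ i in l, ∀ s ∈ Ioc 0 t, |f i s| ≤ 1)
    (hf_lim : ∀ s ∈ Ioo 0 t, Tendsto (f · s) l (𝓝 1)) :
    Tendsto (fun i => ∫ s in 0..t, f i s) l (𝓝 t) := by
  have h := intervalIntegral.tendsto_integral_filter_of_dominated_convergence (μ := volume)
    (a := 0) (b := t) (F := f) (f := fun _ => 1) (fun _ => 1)
    (hf_meas.mono fun i hi => hi.aestronglyMeasurable)
    (hf_bound.mono fun i hi => .of_forall fun s hs => hi s (uIoc_of_le ht ▸ hs))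
    intervalIntegrable_const
    ((volume.ae_ne t).mono fun s hst hs =>
      hf_lim s ⟨(uIoc_of_le ht ▸ hs).1, lt_of_le_of_ne (uIoc_of_le ht ▸ hs).2 hst⟩)
  simpa using h

theorem half_integral_div_eq_integral_comp (g : ℝ → ℝ) {h : ℝ} (hh : h ≠ 0) (t : ℝ) :
    (1 / 2 * ∫ u in 0..2 * h * t, g u) / h = ∫ τ in 0..t, g (2 * h * τ) := by
  rw [intervalIntegral.integral_comp_mul_left g (mul_ne_zero two_ne_zero hh), mul_zero,
    smul_eq_mul]
  field_simp

section UnitIntervalValued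

variable {g : ℝ → ℝ} (hg : Measurable g) (hg01 : ∀ s, 0 ≤ s → g s ∈ Icc 0 1)
include hg hg01

theorem intervalIntegrable_of_mem_Icc_zero_one {t : ℝ} (ht : 0 ≤ t) :
    IntervalIntegrable g volume 0 t :=
  intervalIntegrable_const.mono_fun' (g := fun _ => (1 : ℝ)) hg.aestronglyMeasurable <|
    ae_restrict_of_forall_mem measurableSet_uIoc fun s hs => by
      have hs01 := hg01 s (uIoc_of_le ht ▸ hs).1.le
      simpa [abs_le] using ⟨by linarith [hs01.1], hs01.2⟩

theorem intervalIntegral_le_of_mem_Icc_zero_one {t : ℝ} (ht : 0 ≤ t) :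
    ∫ s in 0..t, g s ≤ t := by
  simpa using intervalIntegral.integral_mono_on ht
    (intervalIntegrable_of_mem_Icc_zero_one hg hg01 ht) intervalIntegrable_const
    fun s hs => (hg01 s hs.1).2

theorem intervalIntegral_mono_of_mem_Icc_zero_one {a b : ℝ} (ha : 0 ≤ a) (hab : a ≤ b) :
    ∫ s in 0..a, g s ≤ ∫ s in 0..b, g s :=
  intervalIntegral.integral_mono_interval le_rfl ha hab
    (ae_restrict_of_forall_mem measurableSet_Ioc fun s hs => (hg01 s hs.1.le).1)
    (intervalIntegrable_of_mem_Icc_zero_one hg hg01 (ha.trans hab))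

end UnitIntervalValued

theorem normalized_MI_tendsto_min
    (M : ℝ → ℝ → ℝ) (H : ℝ → ℝ) (I : ℝ → ℝ → ℝ)
    (hmeas : ∀ ε, 0 < ε → Measurable (M ε))
    (hH : ∀ ε, 0 < ε → 0 < H ε)
    (hM01 : ∀ ε, 0 < ε → ∀ s, 0 ≤ s → M ε s ∈ Set.Icc (0:ℝ) 1)
    (hI : ∀ ε, 0 < ε → ∀ s, I ε s = (1 / 2) * ∫ u in (0:ℝ)..s, M ε u)
    (hIH : ∀ ε, 0 < ε → ∀ s, 0 < s → I ε s ≤ H ε)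
    (hstep : ∀ t ∈ Set.Ioo (0:ℝ) 1,
      Tendsto (fun ε => M ε (2 * H ε * t)) (nhdsWithin 0 (Set.Ioi (0:ℝ))) (nhds 1)) :
    ∀ t, 0 < t →
      Tendsto (fun ε => I ε (2 * H ε * t) / H ε)
        (nhdsWithin 0 (Set.Ioi (0:ℝ))) (nhds (min t 1)) := by
  intro t ht
  have hpos : ∀ᶠ ε in 𝓝[>] (0 : ℝ), 0 < ε := self_mem_nhdsWithin
  have hrescaled_meas : ∀ ε, 0 < ε → Measurable fun τ => M ε (2 * H ε * τ) :=
    fun ε hε => (hmeas ε hε).comp (measurable_const_mul _)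
  have hrescaled01 : ∀ ε, 0 < ε → ∀ τ, 0 ≤ τ → M ε (2 * H ε * τ) ∈ Icc 0 1 :=
    fun ε hε τ hτ => hM01 ε hε _ (mul_nonneg (by linarith [hH ε hε]) hτ)
  have hrescale : ∀ ε, 0 < ε → I ε (2 * H ε * t) / H ε = ∫ τ in 0..t, M ε (2 * H ε * τ) :=
    fun ε hε => by rw [hI ε hε, half_integral_div_eq_integral_comp _ (hH ε hε).ne']
  have hlower : Tendsto (fun ε => ∫ τ in 0..min t 1, M ε (2 * H ε * τ)) (𝓝[>] 0)
      (𝓝 (min t 1)) :=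
    tendsto_intervalIntegral_of_tendsto_one (le_min ht.le zero_le_one)
      (hpos.mono hrescaled_meas)
      (hpos.mono fun ε hε τ hτ => abs_le.2
        ⟨by linarith [(hrescaled01 ε hε τ hτ.1.le).1], (hrescaled01 ε hε τ hτ.1.le).2⟩)
      fun τ hτ => hstep τ ⟨hτ.1, hτ.2.trans_le (min_le_right _ _)⟩
  refine tendsto_of_tendsto_of_tendsto_of_le_of_le' hlower tendsto_const_nhds ?_ ?_
  · filter_upwards [hpos] with ε hε
    rw [hrescale ε hε]
    exact intervalIntegral_mono_of_mem_Icc_zero_one (hrescaled_meas ε hε) (hrescaled01 ε hε)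
      (le_min ht.le zero_le_one) (min_le_left _ _)
  · filter_upwards [hpos] with ε hε
    refine le_min ?_ ((div_le_one (hH ε hε)).2 (hIH ε hε _ (by nlinarith [hH ε hε])))
    rw [hrescale ε hε]
    exact intervalIntegral_le_of_mem_Icc_zero_one (hrescaled_meas ε hε) (hrescaled01 ε hε) ht.le
end

section
/- Let β₀ take value μ₁ = -√(ε/(1-ε)) with probability 1-ε and μ₂ = √((1-ε)/ε) with probability ε, and let N ~ N(0,1) be independent. Then the MMSE of estimating β₀ from √s·β₀ + N equals E[ 1 / (1 - ε + ε·exp( s/(2ε(1-ε)) + √(s/(ε(1-ε)))·N )) ]. -/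
/-!
By Bayes' rule the posterior mean of a two-point prior `p δ_{m₁} + q δ_{m₂}` observed through
`Y = a β + N` is `g(y) = (p m₁ φ₁(y) + q m₂ φ₂(y)) / (p φ₁(y) + q φ₂(y))` with `φᵢ` the density of
`𝒩(a mᵢ, 1)`; it is identified with `E[β | Y]` by testing on sets `Y⁻¹' B`, since `(β, Y)` has law
`p δ_{m₁} ⊗ 𝒩(a m₁, 1) + q δ_{m₂} ⊗ 𝒩(a m₂, 1)`. The pointwise posterior variance then collapses to
`(m₂ - m₁)² p q φ₁ φ₂ / (p φ₁ + q φ₂)`, and the substitution `y = a m₂ + n` turns its integral into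
`E[1 / (p + q exp (c N + c² / 2))]` with `c = a (m₂ - m₁)`. For the centred, unit-variance prior of
the theorem `(m₂ - m₁)² p q = 1` and `c² = s / (ε (1 - ε))`.
-/

open MeasureTheory ProbabilityTheory Real
open scoped ENNReal

lemma gaussianPDFReal_one_eq_mul_exp (μ₁ μ₂ y : ℝ) :
    gaussianPDFReal μ₂ 1 y =
      gaussianPDFReal μ₁ 1 y * exp ((μ₂ - μ₁) * (y - μ₂) + (μ₂ - μ₁) ^ 2 / 2) := by
  simp only [gaussianPDFReal, NNReal.coe_one, mul_one]
  rw [mul_assoc, ← exp_add]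
  congr 2
  ring

lemma integral_gaussianPDFReal_mul_div_mixture {p q : ℝ} (hp : 0 < p) (hq : 0 < q)
    (μ₁ μ₂ : ℝ) :
    ∫ y, gaussianPDFReal μ₁ 1 y * gaussianPDFReal μ₂ 1 y /
        (p * gaussianPDFReal μ₁ 1 y + q * gaussianPDFReal μ₂ 1 y)
      = ∫ n, 1 / (p + q * exp ((μ₂ - μ₁) * n + (μ₂ - μ₁) ^ 2 / 2)) ∂gaussianReal 0 1 := by
  rw [integral_gaussianReal_eq_integral_smul one_ne_zero]
  conv_rhs => rw [← integral_sub_right_eq_self _ μ₂]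
  congr 1 with y
  rw [smul_eq_mul, gaussianPDFReal_sub, zero_add, gaussianPDFReal_one_eq_mul_exp μ₁ μ₂]
  have := gaussianPDFReal_pos μ₁ 1 y one_ne_zero
  field_simp

noncomputable def twoPointPosteriorMean (p q m₁ m₂ a y : ℝ) : ℝ :=
  (p * m₁ * gaussianPDFReal (a * m₁) 1 y + q * m₂ * gaussianPDFReal (a * m₂) 1 y) /
    (p * gaussianPDFReal (a * m₁) 1 y + q * gaussianPDFReal (a * m₂) 1 y)

section PosteriorMean

variable {p q : ℝ} (m₁ m₂ a : ℝ)

lemma twoPoint_mixture_density_pos (hp : 0 < p) (hq : 0 < q) (y : ℝ) :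
    0 < p * gaussianPDFReal (a * m₁) 1 y + q * gaussianPDFReal (a * m₂) 1 y := by
  have := gaussianPDFReal_pos (a * m₁) 1 y one_ne_zero
  have := gaussianPDFReal_pos (a * m₂) 1 y one_ne_zero
  positivity

lemma twoPointPosteriorMean_mul_mixture_density (hp : 0 < p) (hq : 0 < q) (y : ℝ) :
    twoPointPosteriorMean p q m₁ m₂ a y *
        (p * gaussianPDFReal (a * m₁) 1 y + q * gaussianPDFReal (a * m₂) 1 y)
      = p * m₁ * gaussianPDFReal (a * m₁) 1 y + q * m₂ * gaussianPDFReal (a * m₂) 1 y :=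
  div_mul_cancel₀ _ (twoPoint_mixture_density_pos m₁ m₂ a hp hq y).ne'

@[fun_prop]
lemma measurable_twoPointPosteriorMean : Measurable (twoPointPosteriorMean p q m₁ m₂ a) := by
  unfold twoPointPosteriorMean
  fun_prop

lemma abs_twoPointPosteriorMean_le (hp : 0 < p) (hq : 0 < q) (y : ℝ) :
    |twoPointPosteriorMean p q m₁ m₂ a y| ≤ |m₁| + |m₂| := by
  have h₁ := gaussianPDFReal_pos (a * m₁) 1 y one_ne_zero
  have h₂ := gaussianPDFReal_pos (a * m₂) 1 y one_ne_zero
  have hD := twoPoint_mixture_density_pos m₁ m₂ a hp hq y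
  rw [twoPointPosteriorMean, abs_div, abs_of_pos hD, div_le_iff₀ hD]
  refine (abs_add_le _ _).trans ?_
  simp only [abs_mul, abs_of_pos hp, abs_of_pos hq, abs_of_pos h₁, abs_of_pos h₂]
  nlinarith [mul_nonneg (mul_nonneg hp.le (abs_nonneg m₂)) h₁.le,
    mul_nonneg (mul_nonneg hq.le (abs_nonneg m₁)) h₂.le]

lemma twoPoint_posterior_variance (hp : 0 < p) (hq : 0 < q) (y : ℝ) :
    p * (m₁ - twoPointPosteriorMean p q m₁ m₂ a y) ^ 2 * gaussianPDFReal (a * m₁) 1 y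
        + q * (m₂ - twoPointPosteriorMean p q m₁ m₂ a y) ^ 2 * gaussianPDFReal (a * m₂) 1 y
      = (m₂ - m₁) ^ 2 * p * q * (gaussianPDFReal (a * m₁) 1 y * gaussianPDFReal (a * m₂) 1 y /
          (p * gaussianPDFReal (a * m₁) 1 y + q * gaussianPDFReal (a * m₂) 1 y)) := by
  have hD := twoPoint_mixture_density_pos m₁ m₂ a hp hq y
  rw [twoPointPosteriorMean]
  generalize gaussianPDFReal (a * m₁) 1 y = u, gaussianPDFReal (a * m₂) 1 y = v at hD ⊢
  field_simp
  ring

end PosteriorMean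

section GaussianChannel

variable {Ω : Type*} [MeasurableSpace Ω] {P : Measure Ω} [IsFiniteMeasure P] {β N : Ω → ℝ}
  {p q m₁ m₂ : ℝ}

lemma map_prodMk_two_point_gaussian_channel
    (hβ : Measurable β) (hN : Measurable N) (hindep : IndepFun β N P)
    (hβlaw : P.map β = ENNReal.ofReal p • Measure.dirac m₁ + ENNReal.ofReal q • Measure.dirac m₂)
    (hNlaw : P.map N = gaussianReal 0 1) (a : ℝ) :
    P.map (fun ω => (β ω, a * β ω + N ω))
      = ENNReal.ofReal p • (gaussianReal (a * m₁) 1).map (Prod.mk m₁)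
        + ENNReal.ofReal q • (gaussianReal (a * m₂) 1).map (Prod.mk m₂) := by
  set T : ℝ × ℝ → ℝ × ℝ := fun z => (z.1, a * z.1 + z.2)
  have hT : Measurable T := by fun_prop
  have hslice (m : ℝ) :
      ((Measure.dirac m).prod (gaussianReal 0 1)).map T
        = (gaussianReal (a * m) 1).map (Prod.mk m) := by
    rw [Measure.dirac_prod, Measure.map_map hT measurable_prodMk_left,
      show T ∘ Prod.mk m = Prod.mk m ∘ (a * m + ·) from rfl,
      ← Measure.map_map measurable_prodMk_left (by fun_prop), gaussianReal_map_const_add, zero_add]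
  have hpair : P.map (fun ω => (β ω, N ω)) = (P.map β).prod (P.map N) :=
    (indepFun_iff_map_prod_eq_prod_map_map hβ.aemeasurable hN.aemeasurable).mp hindep
  rw [show (fun ω => (β ω, a * β ω + N ω)) = T ∘ fun ω => (β ω, N ω) from rfl,
    ← Measure.map_map hT (hβ.prodMk hN), hpair, hβlaw, hNlaw, Measure.add_prod,
    Measure.prod_smul_left, Measure.prod_smul_left, Measure.map_add _ _ hT, Measure.map_smul,
    Measure.map_smul, hslice, hslice]

lemma integral_two_point_gaussian_channel (hp : 0 ≤ p) (hq : 0 ≤ q)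
    (hβ : Measurable β) (hN : Measurable N) (hindep : IndepFun β N P)
    (hβlaw : P.map β = ENNReal.ofReal p • Measure.dirac m₁ + ENNReal.ofReal q • Measure.dirac m₂)
    (hNlaw : P.map N = gaussianReal 0 1) (a : ℝ)
    {F : ℝ → ℝ → ℝ} (hF : Measurable (Function.uncurry F)) {C₁ C₂ : ℝ}
    (hF₁ : ∀ y, |F m₁ y| ≤ C₁) (hF₂ : ∀ y, |F m₂ y| ≤ C₂) :
    ∫ ω, F (β ω) (a * β ω + N ω) ∂P
      = ∫ y, (p * F m₁ y * gaussianPDFReal (a * m₁) 1 y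
          + q * F m₂ y * gaussianPDFReal (a * m₂) 1 y) := by
  have hslice_integrable (m C : ℝ) (hFm : ∀ y, |F m y| ≤ C) :
      Integrable (Function.uncurry F) ((gaussianReal (a * m) 1).map (Prod.mk m)) ∧
      Integrable (fun y => gaussianPDFReal (a * m) 1 y * F m y) := by
    have hmeas : Measurable (F m) := hF.comp measurable_prodMk_left
    exact ⟨(measurableEmbedding_prodMk_left m).integrable_map_iff.mpr
        (.of_bound hmeas.aestronglyMeasurable C (ae_of_all _ hFm)),
      (integrable_gaussianPDFReal _ 1).mul_bdd hmeas.aestronglyMeasurable (ae_of_all _ hFm)⟩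
  obtain ⟨hint₁, hdens₁⟩ := hslice_integrable m₁ C₁ hF₁
  obtain ⟨hint₂, hdens₂⟩ := hslice_integrable m₂ C₂ hF₂
  have hβY : Measurable fun ω => (β ω, a * β ω + N ω) := by fun_prop
  calc ∫ ω, F (β ω) (a * β ω + N ω) ∂P
      = ∫ z, Function.uncurry F z ∂P.map (fun ω => (β ω, a * β ω + N ω)) :=
        (integral_map hβY.aemeasurable hF.aestronglyMeasurable).symm
    _ = p * ∫ y, F m₁ y ∂gaussianReal (a * m₁) 1 + q * ∫ y, F m₂ y ∂gaussianReal (a * m₂) 1 := by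
        rw [map_prodMk_two_point_gaussian_channel hβ hN hindep hβlaw hNlaw,
          integral_add_measure (hint₁.smul_measure ENNReal.ofReal_ne_top)
            (hint₂.smul_measure ENNReal.ofReal_ne_top),
          integral_smul_measure, integral_smul_measure,
          (measurableEmbedding_prodMk_left m₁).integral_map,
          (measurableEmbedding_prodMk_left m₂).integral_map,
          ENNReal.toReal_ofReal hp, ENNReal.toReal_ofReal hq,
          smul_eq_mul, smul_eq_mul]
        rfl
    _ = ∫ y, (p * F m₁ y * gaussianPDFReal (a * m₁) 1 y
          + q * F m₂ y * gaussianPDFReal (a * m₂) 1 y) := by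
        rw [integral_gaussianReal_eq_integral_smul one_ne_zero,
          integral_gaussianReal_eq_integral_smul one_ne_zero]
        simp only [smul_eq_mul]
        rw [← integral_const_mul, ← integral_const_mul,
          ← integral_add (hdens₁.const_mul p) (hdens₂.const_mul q)]
        congr 1 with y
        ring

theorem condExp_two_point_gaussian_channel (hp : 0 < p) (hq : 0 < q)
    (hβ : Measurable β) (hN : Measurable N) (hindep : IndepFun β N P)
    (hβlaw : P.map β = ENNReal.ofReal p • Measure.dirac m₁ + ENNReal.ofReal q • Measure.dirac m₂)
    (hNlaw : P.map N = gaussianReal 0 1) (a : ℝ) :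
    P[β | MeasurableSpace.comap (fun ω => a * β ω + N ω) Real.measurableSpace]
      =ᵐ[P] fun ω => twoPointPosteriorMean p q m₁ m₂ a (a * β ω + N ω) := by
  set Y := fun ω => a * β ω + N ω
  set g := twoPointPosteriorMean p q m₁ m₂ a
  have hY : Measurable Y := by fun_prop
  have hg : Measurable g := measurable_twoPointPosteriorMean m₁ m₂ a
  have hβint : Integrable β P := by
    have hid : Integrable id (P.map β) := by
      rw [hβlaw]
      exact ((integrable_dirac (by simp)).smul_measure ENNReal.ofReal_ne_top).add_measure
        ((integrable_dirac (by simp)).smul_measure ENNReal.ofReal_ne_top)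
    exact (integrable_map_measure aestronglyMeasurable_id hβ.aemeasurable).mp hid
  have hgY : Integrable (fun ω => g (Y ω)) P :=
    .of_bound (hg.comp hY).aestronglyMeasurable _
      (ae_of_all _ fun ω => abs_twoPointPosteriorMean_le m₁ m₂ a hp hq (Y ω))
  refine (ae_eq_condExp_of_forall_setIntegral_eq hY.comap_le hβint
    (fun _ _ _ => hgY.integrableOn) ?_ (hg.comp (comap_measurable Y)).aestronglyMeasurable).symm
  rintro _ ⟨B, hB, rfl⟩ -
  have hgB (y : ℝ) : |B.indicator g y| ≤ |m₁| + |m₂| := by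
    by_cases hy : y ∈ B
    · simpa [hy] using abs_twoPointPosteriorMean_le m₁ m₂ a hp hq y
    · simp [hy]; positivity
  have h1B (m y : ℝ) : |m * B.indicator 1 y| ≤ |m| := by
    by_cases hy : y ∈ B <;> simp [hy]
  calc ∫ ω in Y ⁻¹' B, g (Y ω) ∂P
      = ∫ ω, B.indicator g (Y ω) ∂P := by rw [← integral_indicator (hY hB)]; rfl
    _ = ∫ y, (p * B.indicator g y * gaussianPDFReal (a * m₁) 1 y
          + q * B.indicator g y * gaussianPDFReal (a * m₂) 1 y) :=
        integral_two_point_gaussian_channel hp.le hq.le hβ hN hindep hβlaw hNlaw a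
          (F := fun _ y => B.indicator g y) (by fun_prop) hgB hgB
    _ = ∫ y, (p * (m₁ * B.indicator 1 y) * gaussianPDFReal (a * m₁) 1 y
          + q * (m₂ * B.indicator 1 y) * gaussianPDFReal (a * m₂) 1 y) := by
        congr 1 with y
        by_cases hy : y ∈ B
        · simp only [Set.indicator_of_mem hy, Pi.one_apply, mul_one]
          linear_combination twoPointPosteriorMean_mul_mixture_density m₁ m₂ a hp hq y
        · simp [hy]
    _ = ∫ ω, β ω * B.indicator 1 (Y ω) ∂P :=
        (integral_two_point_gaussian_channel hp.le hq.le hβ hN hindep hβlaw hNlaw a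
          (F := fun b y => b * B.indicator 1 y) (by fun_prop) (h1B m₁) (h1B m₂)).symm
    _ = ∫ ω in Y ⁻¹' B, β ω ∂P := by
        rw [← integral_indicator (hY hB)]
        congr 1 with ω
        by_cases hω : Y ω ∈ B <;> simp [hω]

theorem integral_sq_sub_condExp_two_point_gaussian_channel (hp : 0 < p) (hq : 0 < q)
    (hβ : Measurable β) (hN : Measurable N) (hindep : IndepFun β N P)
    (hβlaw : P.map β = ENNReal.ofReal p • Measure.dirac m₁ + ENNReal.ofReal q • Measure.dirac m₂)
    (hNlaw : P.map N = gaussianReal 0 1) (a : ℝ) :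
    ∫ ω, (β ω - P[β | MeasurableSpace.comap (fun ω => a * β ω + N ω) Real.measurableSpace] ω) ^ 2
        ∂P
      = (m₂ - m₁) ^ 2 * p * q *
          ∫ n, 1 / (p + q * exp (a * (m₂ - m₁) * n + (a * (m₂ - m₁)) ^ 2 / 2))
            ∂gaussianReal 0 1 := by
  set g := twoPointPosteriorMean p q m₁ m₂ a
  have hbound (m y : ℝ) : |(m - g y) ^ 2| ≤ (|m| + (|m₁| + |m₂|)) ^ 2 := by
    rw [abs_pow]
    exact pow_le_pow_left₀ (abs_nonneg _)
      ((abs_sub _ _).trans (by linarith [abs_twoPointPosteriorMean_le m₁ m₂ a hp hq y])) 2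
  rw [integral_congr_ae ((condExp_two_point_gaussian_channel hp hq hβ hN hindep hβlaw hNlaw a).mono
      fun ω h => by rw [h]),
    integral_two_point_gaussian_channel hp.le hq.le hβ hN hindep hβlaw hNlaw a
      (F := fun b y => (b - g y) ^ 2)
      (by fun_prop)
      (hbound m₁) (hbound m₂)]
  simp only [g, twoPoint_posterior_variance m₁ m₂ a hp hq]
  rw [integral_const_mul, integral_gaussianPDFReal_mul_div_mixture hp hq, mul_sub]

end GaussianChannel

theorem two_point_mmse_formula
    {Ω : Type*} [MeasurableSpace Ω] (P : Measure Ω) [IsProbabilityMeasure P]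
    (ε s : ℝ) (hε : ε ∈ Set.Ioo (0:ℝ) 1) (hs : 0 < s)
    (β₀ N : Ω → ℝ) (hβ : Measurable β₀) (hN : Measurable N)
    (hNlaw : Measure.map N P = gaussianReal 0 1)
    (hβlaw : Measure.map β₀ P =
      ENNReal.ofReal (1 - ε) • Measure.dirac (-Real.sqrt (ε / (1 - ε))) +
        ENNReal.ofReal ε • Measure.dirac (Real.sqrt ((1 - ε) / ε)))
    (hindep : IndepFun β₀ N P)
    (Y : Ω → ℝ) (hY : Y = fun ω => Real.sqrt s * β₀ ω + N ω) :
    ∫ ω, (β₀ ω - (P[β₀ | MeasurableSpace.comap Y Real.measurableSpace]) ω) ^ 2 ∂P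
      = ∫ ω, 1 / (1 - ε + ε * Real.exp (s / (2 * ε * (1 - ε)) +
          Real.sqrt (s / (ε * (1 - ε))) * N ω)) ∂P := by
  obtain ⟨hε₀, hε₁⟩ := hε
  have hε₁' : 0 < 1 - ε := sub_pos.mpr hε₁
  have hgap_sq : (√((1 - ε) / ε) - -√(ε / (1 - ε))) ^ 2 = 1 / (ε * (1 - ε)) := by
    have hprod : √((1 - ε) / ε) * √(ε / (1 - ε)) = 1 := by
      rw [← Real.sqrt_mul (by positivity), div_mul_div_comm, mul_comm (1 - ε),
        div_self (by positivity), Real.sqrt_one]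
    rw [sub_neg_eq_add, add_sq, mul_assoc, hprod, Real.sq_sqrt (by positivity),
      Real.sq_sqrt (by positivity)]
    field_simp
    ring
  have hc : √s * (√((1 - ε) / ε) - -√(ε / (1 - ε))) = √(s / (ε * (1 - ε))) := by
    have hgap : 0 ≤ √((1 - ε) / ε) - -√(ε / (1 - ε)) := by rw [sub_neg_eq_add]; positivity
    rw [Real.sqrt_div' s (by positivity), ← Real.sqrt_sq hgap, hgap_sq,
      Real.sqrt_div' 1 (by positivity), Real.sqrt_one, mul_one_div]
  subst hY
  rw [integral_sq_sub_condExp_two_point_gaussian_channel (by positivity) hε₀ hβ hN hindep hβlaw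
      hNlaw, hc, Real.sq_sqrt (by positivity), hgap_sq,
    show 1 / (ε * (1 - ε)) * (1 - ε) * ε = 1 by field_simp, one_mul, ← hNlaw,
    integral_map hN.aemeasurable (Measurable.aestronglyMeasurable (by fun_prop))]
  congr 1 with ω
  rw [add_comm (√(s / (ε * (1 - ε))) * N ω),
    show s / (ε * (1 - ε)) / 2 = s / (2 * ε * (1 - ε)) by field_simp]
end
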